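/- arXiv:1611.05756 — 2 statements merged into one kernel-verified Lean document; each statement's English description precedes it below -/
import Mathlib

section
/- Every infinite subgroup of GL(d,ℤ) contains an element of infinite order; equivalently, a subgroup of GL(d,ℤ) is finite if and only if every element of it has finite order. -/
/-!
Minkowski's lemma: the kernel of reduction `GL(d,ℤ) → GL(d,ℤ/3)` is torsion-free, so a torsion
subgroup embeds into the finite group `GL(d,ℤ/3)`. For the lemma, take `x = 1 + A` of prime
order `p` with `3 ∣ A`. If `3^m ∣ A` with `m ≥ 1`, expanding `(1 + A)^p = 1` gives
`p A ≡ 0 mod 3^(m+1)` when `p ≠ 3` and `3 A ≡ 0 mod 3^(m+2)` when `p = 3` (using that `3 ∣ C(3,2)`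
and `3m ≥ m + 2`); either way `3^(m+1) ∣ A`, hence `A = 0`.
-/

open Finset

section NatCastPowDvd

variable {R : Type*} [Ring R] {q : ℕ}

theorem natCast_pow_add_dvd_mul {a b : ℕ} {x y : R} (hx : (q : R) ^ a ∣ x)
    (hy : (q : R) ^ b ∣ y) : (q : R) ^ (a + b) ∣ x * y := by
  obtain ⟨x, rfl⟩ := hx
  obtain ⟨y, rfl⟩ := hy
  refine ⟨x * y, ?_⟩
  rw [pow_add, mul_assoc, ← mul_assoc x, ← ((Nat.cast_commute q x).pow_left b).eq]
  simp only [mul_assoc]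

theorem natCast_pow_mul_dvd_pow {m : ℕ} {x : R} (hx : (q : R) ^ m ∣ x) :
    ∀ k : ℕ, (q : R) ^ (m * k) ∣ x ^ k
  | 0 => by simp
  | k + 1 => by
    rw [Nat.mul_succ, pow_succ]
    exact natCast_pow_add_dvd_mul (natCast_pow_mul_dvd_pow hx k) hx

theorem natCast_pow_dvd_of_dvd_mul_natCast {p e : ℕ} (hpq : p.Coprime (q ^ e)) {x : R}
    (h : (q : R) ^ e ∣ x * p) : (q : R) ^ e ∣ x := by
  obtain ⟨u, v, huv⟩ := Nat.Coprime.isCoprime hpq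
  have hx : x = x * p * u + (q : R) ^ e * (v * x) :=
    calc x = x * ((u * p + v * (q ^ e : ℕ) : ℤ) : R) := by rw [huv, Int.cast_one, mul_one]
      _ = _ := by
        push_cast
        rw [mul_add, Int.cast_comm u, ← mul_assoc, ← mul_assoc,
          ← ((Nat.cast_commute q _).pow_left e).eq, Int.cast_comm v]
  rw [hx]
  exact dvd_add (h.mul_right _) (dvd_mul_right _ _)

theorem natCast_pow_dvd_of_dvd_mul_natCast_self {e : ℕ} (hq : IsRightRegular (q : R)) {x : R}
    (h : (q : R) ^ (e + 1) ∣ x * q) : (q : R) ^ e ∣ x := by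
  obtain ⟨y, hy⟩ := h
  refine ⟨y, hq ?_⟩
  simp only [hy, pow_succ, mul_assoc, Nat.cast_comm]

theorem natCast_pow_dvd_mul_natCast_of_one_add_pow_eq_one {p e : ℕ} {A : R}
    (h : (1 + A) ^ p = 1) (hterms : ∀ k ∈ Ico 2 (p + 1), (q : R) ^ e ∣ A ^ k * p.choose k) :
    (q : R) ^ e ∣ A * p := by
  rcases p.eq_zero_or_pos with rfl | hp
  · simp
  have hsum := (Commute.one_right A).add_pow p
  rw [add_comm, h, range_eq_Ico, sum_eq_sum_Ico_succ_bot (by omega),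
    sum_eq_sum_Ico_succ_bot (by omega)] at hsum
  simp only [zero_add, one_pow, mul_one, pow_zero, Nat.choose_zero_right, Nat.cast_one, pow_one,
    Nat.choose_one_right] at hsum
  have hAp : A * p = -∑ k ∈ Ico 2 (p + 1), A ^ k * p.choose k := by
    rw [eq_neg_iff_add_eq_zero]
    simpa using hsum.symm
  rw [hAp]
  exact (dvd_sum hterms).neg_right

theorem natCast_pow_succ_dvd_of_one_add_pow_eq_one (hq : q.Prime) (hq3 : 3 ≤ q)
    (hreg : IsRightRegular (q : R)) {p m : ℕ} (hp : p.Prime) (hm : 0 < m) {A : R}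
    (hA : (q : R) ^ m ∣ A) (h : (1 + A) ^ p = 1) : (q : R) ^ (m + 1) ∣ A := by
  have hpow := natCast_pow_mul_dvd_pow hA
  by_cases hpq : p = q
  · subst p
    refine natCast_pow_dvd_of_dvd_mul_natCast_self hreg
      (natCast_pow_dvd_mul_natCast_of_one_add_pow_eq_one h fun k hk => ?_)
    obtain ⟨hk2, hkp⟩ := mem_Ico.mp hk
    rcases (Nat.lt_succ_iff.mp hkp).lt_or_eq with hkq | hkq
    · have hchoose : (q : R) ^ 1 ∣ (q.choose k : R) := by
        rw [pow_one]
        exact Nat.cast_dvd_cast (hq.dvd_choose_self (by omega) hkq)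
      exact (pow_dvd_pow _ (by nlinarith)).trans (natCast_pow_add_dvd_mul (hpow k) hchoose)
    · rw [hkq, Nat.choose_self, Nat.cast_one, mul_one]
      exact (pow_dvd_pow _ (by nlinarith)).trans (hpow q)
  · have hcop : p.Coprime (q ^ (m + 1)) :=
      ((Nat.coprime_primes hp hq).mpr hpq).pow_right _
    refine natCast_pow_dvd_of_dvd_mul_natCast hcop
      (natCast_pow_dvd_mul_natCast_of_one_add_pow_eq_one h fun k hk => ?_)
    have hk2 := (mem_Ico.mp hk).1
    exact ((pow_dvd_pow _ (by nlinarith)).trans (hpow k)).mul_right _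

end NatCastPowDvd

namespace Matrix

variable {n : Type*} [Fintype n] [DecidableEq n]

theorem natCast_dvd_iff {q : ℕ} {M : Matrix n n ℤ} :
    (q : Matrix n n ℤ) ∣ M ↔ ∀ i j, (q : ℤ) ∣ M i j := by
  constructor
  · rintro ⟨B, rfl⟩ i j
    exact ⟨B i j, by rw [← nsmul_eq_mul, smul_apply, nsmul_eq_mul]⟩
  · intro h
    choose B hB using h
    exact ⟨of B, by ext i j; rw [← nsmul_eq_mul, smul_apply, of_apply, nsmul_eq_mul, hB]⟩

theorem isRightRegular_natCast {q : ℕ} (hq : q ≠ 0) : IsRightRegular (q : Matrix n n ℤ) := by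
  intro x y hxy
  simp only [← Nat.cast_comm, ← nsmul_eq_mul] at hxy
  ext i j
  simpa [hq] using congr_fun₂ hxy i j

theorem eq_zero_of_forall_natCast_pow_dvd {q : ℕ} (hq : q ≠ 1) {A : Matrix n n ℤ}
    (h : ∀ m, (q : Matrix n n ℤ) ^ m ∣ A) : A = 0 := by
  ext i j
  by_contra hA
  obtain ⟨m, hm⟩ := (Int.finiteMultiplicity_iff (a := q)).mpr ⟨by simpa using hq, hA⟩
  have := h (m + 1)
  rw [← Nat.cast_pow, natCast_dvd_iff] at this
  exact hm (by exact_mod_cast this i j)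

theorem eq_zero_of_one_add_pow_eq_one {q p : ℕ} (hq : q.Prime) (hq3 : 3 ≤ q) (hp : p.Prime)
    {A : Matrix n n ℤ} (hA : (q : Matrix n n ℤ) ∣ A) (h : (1 + A) ^ p = 1) : A = 0 := by
  have hsucc : ∀ m, (q : Matrix n n ℤ) ^ (m + 1) ∣ A := by
    intro m
    induction m with
    | zero => simpa using hA
    | succ m ih =>
      exact natCast_pow_succ_dvd_of_one_add_pow_eq_one hq hq3
        (isRightRegular_natCast hq.ne_zero) hp m.succ_pos ih h
  exact eq_zero_of_forall_natCast_pow_dvd hq.one_lt.ne'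
    fun m => (pow_dvd_pow _ m.le_succ).trans (hsucc m)

end Matrix

namespace Matrix.GeneralLinearGroup

variable {n : Type*} [Fintype n] [DecidableEq n]

theorem natCast_dvd_sub_one_of_map_eq_one {q : ℕ} {x : GL n ℤ}
    (hx : map (Int.castRingHom (ZMod q)) x = 1) : (q : Matrix n n ℤ) ∣ (x : Matrix n n ℤ) - 1 := by
  rw [natCast_dvd_iff]
  intro i j
  have hij := congrArg (fun g : GL n (ZMod q) => (g : Matrix n n (ZMod q)) i j) hx
  simp only [GeneralLinearGroup.map_apply, eq_intCast, Units.val_one] at hij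
  rw [← ZMod.intCast_zmod_eq_zero_iff_dvd, sub_apply, Int.cast_sub, hij, sub_eq_zero]
  by_cases h : i = j <;> simp [one_apply, h]

theorem eq_one_of_isOfFinOrder_of_map_eq_one {q : ℕ} (hq : q.Prime) (hq3 : 3 ≤ q) {x : GL n ℤ}
    (hx : IsOfFinOrder x) (h1 : map (Int.castRingHom (ZMod q)) x = 1) : x = 1 := by
  by_contra hne
  obtain ⟨p, hp, hpN⟩ := Nat.exists_prime_and_dvd (mt orderOf_eq_one_iff.mp hne)
  set y := x ^ (orderOf x / p)
  have hy : orderOf y = p := orderOf_pow_orderOf_div hx.orderOf_pos.ne' hpN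
  have hy1 : map (Int.castRingHom (ZMod q)) y = 1 := by rw [map_pow, h1, one_pow]
  have hyp : (1 + ((y : Matrix n n ℤ) - 1)) ^ p = 1 := by
    rw [add_sub_cancel, ← Units.val_pow_eq_pow_val, ← hy, pow_orderOf_eq_one, Units.val_one]
  have hy_eq : y = 1 := Units.ext <| sub_eq_zero.mp <|
    eq_zero_of_one_add_pow_eq_one hq hq3 hp (natCast_dvd_sub_one_of_map_eq_one hy1) hyp
  rw [hy_eq, orderOf_one] at hy
  exact hp.one_lt.ne hy

theorem finite_of_forall_isOfFinOrder {H : Subgroup (GL n ℤ)} (hH : ∀ x ∈ H, IsOfFinOrder x) :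
    Finite H := by
  let φ := (map (Int.castRingHom (ZMod 3))).comp H.subtype
  refine Finite.of_injective φ ((injective_iff_map_eq_one φ).mpr fun x hx => ?_)
  exact Subtype.ext (eq_one_of_isOfFinOrder_of_map_eq_one Nat.prime_three le_rfl (hH x x.2) hx)

end Matrix.GeneralLinearGroup

/-- A subgroup of `GL(d,ℤ)` is finite if and only if it is periodic (every element has
finite order); equivalently, every infinite subgroup contains an element of infinite order. -/
theorem subgroup_glZ_finite_iff_torsion (d : ℕ) (H : Subgroup (GL (Fin d) ℤ)) :
    (H : Set (GL (Fin d) ℤ)).Finite ↔ ∀ x ∈ H, IsOfFinOrder x := by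
  refine ⟨fun hfin x hx => ?_, fun hH => Set.finite_coe_iff.mp
    (Matrix.GeneralLinearGroup.finite_of_forall_isOfFinOrder hH)⟩
  have := hfin.to_subtype
  exact Submonoid.isOfFinOrder_coe.mpr (isOfFinOrder_of_finite (⟨x, hx⟩ : H))
end

section
/- Let A = {a_0, …, a_{N-1}} be indexed by ℤ/Nℤ and θ_N the substitution a_i ↦ a_i a_{i+1} (indices mod N). Then every word a_i a_j of length 2 (for all i, j ∈ ℤ/Nℤ) occurs as a factor of some word θ_N^k(a_0) for some k ∈ ℕ. -/
/-- The cyclic Thue–Morse substitution `θ_N : a_i ↦ a_i a_{i+1}` (indices mod `N`),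
extended to words by concatenation. -/
def cyclicTM (N : ℕ) : List (ZMod N) → List (ZMod N) :=
  fun w => w.flatMap fun i => [i, i + 1]

lemma cyclicTM_step_mem {N : ℕ} {x : ZMod N} {w : List (ZMod N)} (h : x ∈ w) :
    [x, x + 1] <:+: cyclicTM N w := by
  obtain ⟨u, v, rfl⟩ := List.append_of_mem h
  exact ⟨cyclicTM N u, cyclicTM N v, by simp [cyclicTM]⟩

lemma cyclicTM_step_infix {N : ℕ} {a b : ZMod N} {w : List (ZMod N)}
    (h : [a, b] <:+: w) : [a + 1, b] <:+: cyclicTM N w := by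
  obtain ⟨u, v, rfl⟩ := h
  exact ⟨cyclicTM N u ++ [a], (b + 1) :: cyclicTM N v, by simp [cyclicTM]⟩

lemma cyclicTM_mem_iter (N : ℕ) : ∀ m : ℕ, ((m : ZMod N)) ∈ (cyclicTM N)^[m] [(0 : ZMod N)]
  | 0 => by simp
  | m + 1 => by
    have h := cyclicTM_step_mem (cyclicTM_mem_iter N m)
    rw [Function.iterate_succ_apply']
    push_cast
    exact h.subset (by simp)

/-- Every two-letter word `a_i a_j` occurs as a factor of some iterate `θ_N^k(a_0)`. -/
theorem cyclicTM_all_two_letter_words_legal (N : ℕ) (hN : 0 < N) :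
    ∀ i j : ZMod N, ∃ k : ℕ, [i, j] <:+: (cyclicTM N)^[k] [(0 : ZMod N)] := by
  haveI : NeZero N := ⟨hN.ne'⟩
  intro i j
  obtain ⟨k, hk⟩ : ∃ k, [j - 1, j] <:+: (cyclicTM N)^[k] [(0 : ZMod N)] := by
    obtain ⟨m, hm⟩ : ∃ m : ℕ, (m : ZMod N) = j - 1 := ⟨(j - 1).val, ZMod.natCast_zmod_val _⟩
    refine ⟨m + 1, ?_⟩
    rw [Function.iterate_succ_apply']
    have h := cyclicTM_step_mem (cyclicTM_mem_iter N m)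
    rw [hm] at h
    simpa using h
  have key : ∀ m : ℕ, [j - 1 + m, j] <:+: (cyclicTM N)^[k + m] [(0 : ZMod N)] := by
    intro m
    induction m with
    | zero => simpa using hk
    | succ m ih =>
      have h := cyclicTM_step_infix ih
      rw [show cyclicTM N ((cyclicTM N)^[k + m] [(0:ZMod N)]) = (cyclicTM N)^[k + (m+1)] [(0:ZMod N)] from (Function.iterate_succ_apply' _ _ _).symm] at h
      have e : j - 1 + (m : ZMod N) + 1 = j - 1 + ((m + 1 : ℕ) : ZMod N) := by push_cast; ring
      rw [e] at h
      exact h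
  obtain ⟨m, hm⟩ : ∃ m : ℕ, (m : ZMod N) = i - j + 1 := ⟨(i - j + 1).val, ZMod.natCast_zmod_val _⟩
  refine ⟨k + m, ?_⟩
  have h := key m
  rw [hm, show j - 1 + (i - j + 1) = i by ring] at h
  exact h
end
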